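/- arXiv:1312.1964 — 3 statements merged into one kernel-verified Lean document; each statement's English description precedes it below -/
import Mathlib

section
/- Let H : ℝ^N × ℝ^N → ℝ be smooth, B a symmetric invertible real N×N matrix, and define Q(U) = (1/2) U · B⁻¹ U. If U : ℝ × ℝ → ℝ^N is a smooth solution of ∂_t U = ∂_x (B · EH[U]), where (EH[U])_α = ∂H/∂U_α(U,U_x) − D_x(∂H/∂U_{α,x}(U,U_x)), then Q(U) satisfies the additional conservation law ∂_t Q(U) = ∂_x S[U], where S[U] = U · EH[U] + LH[U] and LH[U] = U_x · ∇_{U_x}H(U,U_x) − H(U,U_x). -/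
open Matrix


section aux
variable {G : Type*} [NormedAddCommGroup G] [NormedSpace ℝ G] {t x : ℝ}

lemma hasDerivAt_partial_x (F : ℝ × ℝ → G) (hF : DifferentiableAt ℝ F (t, x)) :
    HasDerivAt (fun y => F (t, y)) (fderiv ℝ F (t, x) (0, 1)) x := by
  have hc : HasDerivAt (fun y : ℝ => ((t, y) : ℝ × ℝ)) (0, 1) x :=
    (hasDerivAt_const x t).prodMk (hasDerivAt_id x)
  exact hF.hasFDerivAt.comp_hasDerivAt x hc

lemma hasDerivAt_partial_t (F : ℝ × ℝ → G) (hF : DifferentiableAt ℝ F (t, x)) :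
    HasDerivAt (fun s => F (s, x)) (fderiv ℝ F (t, x) (1, 0)) t := by
  have hc : HasDerivAt (fun s : ℝ => ((s, x) : ℝ × ℝ)) (1, 0) t :=
    (hasDerivAt_id t).prodMk (hasDerivAt_const t x)
  exact hF.hasFDerivAt.comp_hasDerivAt t hc

lemma hasDerivAt_update' {N : ℕ} (u : Fin N → ℝ) (α : Fin N) (s : ℝ) :
    HasDerivAt (fun s : ℝ => Function.update u α s) (Pi.single α 1) s := by
  have h : (fun s : ℝ => Function.update u α s)
      = fun s : ℝ => u + (s - u α) • (Pi.single α 1 : Fin N → ℝ) := by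
    funext s
    funext β
    by_cases hb : β = α
    · subst hb; simp [Function.update_apply, Pi.single_apply]
    · simp [Function.update_apply, hb, Pi.single_apply]
  rw [h]
  have := (((hasDerivAt_id s).sub_const (u α)).smul_const
      (Pi.single α 1 : Fin N → ℝ)).const_add u
  simpa using this

lemma sum_single_smul {N : ℕ} (a : Fin N → ℝ) :
    ∑ α : Fin N, a α • (Pi.single α 1 : Fin N → ℝ) = a := by
  funext β
  simp [Pi.single_apply, Finset.sum_ite_eq']
end aux

section aux2
variable {N : ℕ}
local notation "E" => Fin N → ℝ

lemma clm_pair_expand (L : ((Fin N → ℝ) × (Fin N → ℝ)) →L[ℝ] ℝ) (a b : Fin N → ℝ) :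
    L (a, b) = (∑ α, a α * L (Pi.single α 1, 0)) + ∑ α, b α * L (0, Pi.single α 1) := by
  have h1 : ((a, b) : E × E) = (a, 0) + (0, b) := by simp
  have ha : ((a, (0 : E)) : E × E) = ∑ α, a α • ((Pi.single α 1 : E), (0 : E)) := by
    apply Prod.ext <;> simp [Prod.fst_sum, Prod.snd_sum, sum_single_smul]
  have hb : (((0 : E), b) : E × E) = ∑ α, b α • (((0 : E), (Pi.single α 1 : E))) := by
    apply Prod.ext <;> simp [Prod.fst_sum, Prod.snd_sum, sum_single_smul]
  rw [h1, map_add, ha, hb, map_sum, map_sum]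
  congr 1 <;> refine Finset.sum_congr rfl fun α _ => ?_
  · rw [L.map_smul, smul_eq_mul]
  · rw [L.map_smul, smul_eq_mul]

lemma deriv_update_fst (H' : ((Fin N → ℝ) × (Fin N → ℝ)) → ℝ) (hH : ContDiff ℝ (⊤ : ℕ∞) H')
    (u v : Fin N → ℝ) (α : Fin N) :
    deriv (fun s => H' (Function.update u α s, v)) (u α)
      = fderiv ℝ H' (u, v) (Pi.single α 1, 0) := by
  have hc : HasDerivAt (fun s : ℝ => ((Function.update u α s, v) : (Fin N → ℝ) × (Fin N → ℝ)))
      ((Pi.single α 1, 0)) (u α) :=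
    (hasDerivAt_update' u α (u α)).prodMk (hasDerivAt_const (u α) v)
  have hF : HasFDerivAt H' (fderiv ℝ H' (u, v)) (Function.update u α (u α), v) := by
    rw [Function.update_eq_self]
    exact (hH.differentiable (by simp) (u, v)).hasFDerivAt
  exact (hF.comp_hasDerivAt (u α) hc).deriv

lemma deriv_update_snd (H' : ((Fin N → ℝ) × (Fin N → ℝ)) → ℝ) (hH : ContDiff ℝ (⊤ : ℕ∞) H')
    (u v : Fin N → ℝ) (α : Fin N) :
    deriv (fun s => H' (u, Function.update v α s)) (v α)
      = fderiv ℝ H' (u, v) (0, Pi.single α 1) := by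
  have hc : HasDerivAt (fun s : ℝ => ((u, Function.update v α s) : (Fin N → ℝ) × (Fin N → ℝ)))
      ((0, Pi.single α 1)) (v α) :=
    (hasDerivAt_const (v α) u).prodMk (hasDerivAt_update' v α (v α))
  have hF : HasFDerivAt H' (fderiv ℝ H' (u, v)) (u, Function.update v α (v α)) := by
    rw [Function.update_eq_self]
    exact (hH.differentiable (by simp) (u, v)).hasFDerivAt
  exact (hF.comp_hasDerivAt (v α) hc).deriv
end aux2

/-- impulse conservation law. If `U` is a smooth solution of the KdV-like
Hamiltonian system `∂_t U = ∂_x (B · EH[U])`, where `EH` is the variational derivative of the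
Hamiltonian density `H(U, U_x)`, `B` symmetric invertible, and `Q(U) = (1/2) U · B⁻¹U`, then
`∂_t Q(U) = ∂_x S[U]` with `S[U] = U · EH[U] + LH[U]`,
`LH[U] = U_x · ∇_{U_x}H(U,U_x) − H(U,U_x)`. -/
theorem impulse_conservation_law
    {N : ℕ} (B : Matrix (Fin N) (Fin N) ℝ)
    (hBsymm : B.IsSymm) (hBinv : IsUnit B.det)
    (H : (Fin N → ℝ) → (Fin N → ℝ) → ℝ)
    (hH : ContDiff ℝ (⊤ : ℕ∞) (fun p : (Fin N → ℝ) × (Fin N → ℝ) => H p.1 p.2))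
    (U : ℝ → ℝ → (Fin N → ℝ))
    (hU : ContDiff ℝ (⊤ : ℕ∞) (fun p : ℝ × ℝ => U p.1 p.2)) :
    let Ux : ℝ → ℝ → (Fin N → ℝ) := fun t x => deriv (fun y => U t y) x
    -- variational derivative EH[U]_α = ∂H/∂U_α(U,U_x) − D_x(∂H/∂U_{α,x}(U,U_x))
    let EH : ℝ → ℝ → (Fin N → ℝ) := fun t x α =>
      deriv (fun s => H (Function.update (U t x) α s) (Ux t x)) (U t x α)
      - deriv (fun y =>
          deriv (fun s => H (U t y) (Function.update (Ux t y) α s)) (Ux t y α)) x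
    let Q : (Fin N → ℝ) → ℝ := fun v => (1 / 2) * (v ⬝ᵥ B⁻¹.mulVec v)
    -- Legendre transform LH[U] = U_x · ∇_{U_x}H − H
    let LH : ℝ → ℝ → ℝ := fun t x =>
      (Ux t x ⬝ᵥ fun α =>
        deriv (fun s => H (U t x) (Function.update (Ux t x) α s)) (Ux t x α))
      - H (U t x) (Ux t x)
    let Sflux : ℝ → ℝ → ℝ := fun t x => (U t x ⬝ᵥ EH t x) + LH t x
    -- the Hamiltonian evolution equation ∂_t U = ∂_x (B · EH[U])
    (∀ t x α, deriv (fun s => U s x α) t = deriv (fun y => B.mulVec (EH t y) α) x) →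
    -- the impulse conservation law ∂_t Q(U) = ∂_x S[U]
    ∀ t x, deriv (fun s => Q (U s x)) t = deriv (fun y => Sflux t y) x := by
  intro Ux EH Q LH Sflux hPDE t x
  classical
  set V : ℝ × ℝ → (Fin N → ℝ) := fun p => U p.1 p.2 with hVdef
  have hVc : ContDiff ℝ (⊤ : ℕ∞) V := hU
  set H' : ((Fin N → ℝ) × (Fin N → ℝ)) → ℝ := fun p => H p.1 p.2 with hH'def
  have hH'c : ContDiff ℝ (⊤ : ℕ∞) H' := hH
  set W : ℝ × ℝ → (Fin N → ℝ) := fun p => fderiv ℝ V p (0, 1) with hWdef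
  have hWc : ContDiff ℝ (⊤ : ℕ∞) W := (hVc.fderiv_right (by simp)).clm_apply contDiff_const
  have hUxW : ∀ t' y, Ux t' y = W (t', y) := by
    intro t' y
    exact (hasDerivAt_partial_x V (hVc.differentiable (by simp) (t', y))).deriv
  set c : ℝ → ((Fin N → ℝ) × (Fin N → ℝ)) := fun y => (V (t, y), W (t, y)) with hcdef
  have hcC : ContDiff ℝ (⊤ : ℕ∞) c := by
    have hl : ContDiff ℝ (⊤ : ℕ∞) (fun y : ℝ => ((t, y) : ℝ × ℝ)) := contDiff_const.prodMk contDiff_id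
    exact (hVc.comp hl).prodMk (hWc.comp hl)
  set w1 : Fin N → ℝ := fderiv ℝ V (t, x) (0, 1) with hw1
  set w2 : Fin N → ℝ := fderiv ℝ W (t, x) (0, 1) with hw2
  have hcd : HasDerivAt c (w1, w2) x :=
    (hasDerivAt_partial_x V (hVc.differentiable (by simp) (t, x))).prodMk
      (hasDerivAt_partial_x W (hWc.differentiable (by simp) (t, x)))
  set hu : Fin N → ℝ → ℝ := fun α y => fderiv ℝ H' (c y) (Pi.single α 1, 0) with hhu
  set hv : Fin N → ℝ → ℝ := fun α y => fderiv ℝ H' (c y) (0, Pi.single α 1) with hhv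
  have huC : ∀ α, ContDiff ℝ (⊤ : ℕ∞) (hu α) := fun α =>
    ((hH'c.fderiv_right (by simp)).comp hcC).clm_apply contDiff_const
  have hvC : ∀ α, ContDiff ℝ (⊤ : ℕ∞) (hv α) := fun α =>
    ((hH'c.fderiv_right (by simp)).comp hcC).clm_apply contDiff_const
  have hvdC : ∀ α, ContDiff ℝ (⊤ : ℕ∞) (deriv (hv α)) := fun α => by
    have h : ContDiff ℝ (⊤ : ℕ∞) (fun y => fderiv ℝ (hv α) y 1) :=
      ((hvC α).fderiv_right (by simp)).clm_apply contDiff_const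
    exact h
  -- rewrite EH in terms of hu, hv
  have hEH : ∀ y α, EH t y α = hu α y - deriv (hv α) y := by
    intro y α
    have e1 : deriv (fun s => H (Function.update (U t y) α s) (Ux t y)) (U t y α) = hu α y := by
      rw [hUxW t y]
      exact deriv_update_fst H' hH'c (V (t, y)) (W (t, y)) α
    have e2 : (fun z => deriv (fun s => H (U t z) (Function.update (Ux t z) α s)) (Ux t z α))
        = hv α := by
      funext z
      rw [hUxW t z]
      exact deriv_update_snd H' hH'c (V (t, z)) (W (t, z)) α
    show deriv (fun s => H (Function.update (U t y) α s) (Ux t y)) (U t y α)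
        - deriv (fun z =>
            deriv (fun s => H (U t z) (Function.update (Ux t z) α s)) (Ux t z α)) y
        = hu α y - deriv (hv α) y
    rw [e1, e2]
  set dEH : Fin N → ℝ := fun α => deriv (fun y => hu α y - deriv (hv α) y) x with hdEHdef
  have hEHdiff : ∀ α, DifferentiableAt ℝ (fun y => hu α y - deriv (hv α) y) x := fun α =>
    ((huC α).differentiable (by simp) x).sub ((hvdC α).differentiable (by simp) x)
  have hEHd : ∀ α, HasDerivAt (fun y => EH t y α) (dEH α) x := by
    intro α
    have h : (fun y => EH t y α) = fun y => hu α y - deriv (hv α) y := funext fun y => hEH y α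
    rw [h]
    exact (hEHdiff α).hasDerivAt
  -- component derivatives of V and W in x
  have hVcomp : ∀ α, HasDerivAt (fun y => V (t, y) α) (w1 α) x := by
    intro α
    have h := hasDerivAt_partial_x V (hVc.differentiable (by simp) (t, x))
    simpa [Function.comp_def] using
      ((ContinuousLinearMap.proj (R := ℝ) (φ := fun _ : Fin N => ℝ) α).hasFDerivAt).comp_hasDerivAt
        x h
  have hWcomp : ∀ α, HasDerivAt (fun y => W (t, y) α) (w2 α) x := by
    intro α
    have h := hasDerivAt_partial_x W (hWc.differentiable (by simp) (t, x))
    simpa [Function.comp_def] using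
      ((ContinuousLinearMap.proj (R := ℝ) (φ := fun _ : Fin N => ℝ) α).hasFDerivAt).comp_hasDerivAt
        x h
  -- derivative of the Hamiltonian density along the solution
  set gd : ℝ := fderiv ℝ H' (c x) (w1, w2) with hgddef
  have hg : HasDerivAt (fun y => H' (c y)) gd x :=
    (hH'c.differentiable (by simp) (c x)).hasFDerivAt.comp_hasDerivAt x hcd
  have hgdval : gd = (∑ α, w1 α * hu α x) + ∑ α, w2 α * hv α x :=
    clm_pair_expand (fderiv ℝ H' (c x)) w1 w2
  -- rewrite Sflux
  have hSfun : (fun y => Sflux t y) = fun y =>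
      (∑ α, V (t, y) α * (hu α y - deriv (hv α) y))
        + ((∑ α, W (t, y) α * hv α y) - H' (c y)) := by
    funext y
    have hd1 : U t y ⬝ᵥ EH t y = ∑ α, V (t, y) α * (hu α y - deriv (hv α) y) := by
      simp only [dotProduct]
      exact Finset.sum_congr rfl fun α _ => by rw [hEH y α]
    have hd2 : (Ux t y ⬝ᵥ fun α =>
        deriv (fun s => H (U t y) (Function.update (Ux t y) α s)) (Ux t y α))
        = ∑ α, W (t, y) α * hv α y := by
      simp only [dotProduct]
      refine Finset.sum_congr rfl fun α _ => ?_
      rw [hUxW t y]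
      congr 1
      exact deriv_update_snd H' hH'c (V (t, y)) (W (t, y)) α
    have hd3 : H (U t y) (Ux t y) = H' (c y) := by rw [hUxW t y]
    show (U t y ⬝ᵥ EH t y)
        + ((Ux t y ⬝ᵥ fun α =>
            deriv (fun s => H (U t y) (Function.update (Ux t y) α s)) (Ux t y α))
          - H (U t y) (Ux t y)) = _
    rw [hd1, hd2, hd3]
  -- derivative of Sflux
  have hS : HasDerivAt (fun y => Sflux t y)
      ((∑ α, (w1 α * (hu α x - deriv (hv α) x) + V (t, x) α * dEH α))
        + ((∑ α, (w2 α * hv α x + w1 α * deriv (hv α) x)) - gd)) x := by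
    rw [hSfun]
    apply HasDerivAt.add
    · exact HasDerivAt.fun_sum fun α _ => (hVcomp α).mul (hEHdiff α).hasDerivAt
    · apply HasDerivAt.sub
      · exact HasDerivAt.fun_sum fun α _ =>
          (hWcomp α).mul (((hvC α).differentiable (by simp) x).hasDerivAt)
      · exact hg
  have hRHS : deriv (fun y => Sflux t y) x = ∑ α, V (t, x) α * dEH α := by
    rw [hS.deriv, hgdval]
    simp only [mul_sub, Finset.sum_add_distrib, Finset.sum_sub_distrib]
    abel
  -- time derivative of U
  set τ : Fin N → ℝ := fderiv ℝ V (t, x) (1, 0) with hτdef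
  have hUt : ∀ α, HasDerivAt (fun s => U s x α) (τ α) t := by
    intro α
    have h := hasDerivAt_partial_t V (hVc.differentiable (by simp) (t, x))
    simpa [Function.comp_def] using
      ((ContinuousLinearMap.proj (R := ℝ) (φ := fun _ : Fin N => ℝ) α).hasFDerivAt).comp_hasDerivAt
        t h
  -- the evolution equation expresses τ through dEH
  have hτval : ∀ α, τ α = ∑ γ, B α γ * dEH γ := by
    intro α
    have h1 : deriv (fun s => U s x α) t = τ α := (hUt α).deriv
    have h2 : (fun y => B.mulVec (EH t y) α)
        = fun y => ∑ γ, B α γ * (hu γ y - deriv (hv γ) y) := by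
      funext y
      simp only [Matrix.mulVec, dotProduct]
      exact Finset.sum_congr rfl fun γ _ => by rw [hEH y γ]
    have h3 : HasDerivAt (fun y => ∑ γ, B α γ * (hu γ y - deriv (hv γ) y))
        (∑ γ, B α γ * dEH γ) x :=
      HasDerivAt.fun_sum fun γ _ => HasDerivAt.const_mul (B α γ) (hEHdiff γ).hasDerivAt
    rw [← h1, hPDE t x α, h2, h3.deriv]
  -- derivative of Q along the solution
  have hQfun : (fun s => Q (U s x)) = fun s =>
      (1 / 2) * ∑ β, U s x β * ∑ γ, B⁻¹ β γ * U s x γ := by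
    funext s
    show (1 / 2) * (U s x ⬝ᵥ B⁻¹.mulVec (U s x)) = _
    simp only [Matrix.mulVec, dotProduct]
  have hQd : HasDerivAt (fun s => Q (U s x))
      ((1 / 2) * ∑ β, (τ β * ∑ γ, B⁻¹ β γ * U t x γ + U t x β * ∑ γ, B⁻¹ β γ * τ γ)) t := by
    rw [hQfun]
    exact HasDerivAt.const_mul (1 / 2)
      (HasDerivAt.fun_sum fun β _ => (hUt β).mul
        (HasDerivAt.fun_sum fun γ _ => HasDerivAt.const_mul (B⁻¹ β γ) (hUt γ)))
  -- symmetry of B⁻¹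
  have hBis : (B⁻¹)ᵀ = B⁻¹ := by
    rw [Matrix.transpose_nonsing_inv, hBsymm]
  have hBie : ∀ β γ, B⁻¹ β γ = B⁻¹ γ β := by
    intro β γ
    conv_lhs => rw [← hBis]
    exact Matrix.transpose_apply _ _ _
  have hMτ : ∀ β, ∑ γ, B⁻¹ β γ * τ γ = dEH β := by
    intro β
    have hτv : τ = B.mulVec dEH := by
      funext γ
      rw [hτval γ]
      simp [Matrix.mulVec, dotProduct]
    have e1 : ∑ γ, B⁻¹ β γ * τ γ = B⁻¹.mulVec τ β := by
      simp [Matrix.mulVec, dotProduct]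
    rw [e1, hτv, Matrix.mulVec_mulVec, Matrix.nonsing_inv_mul B hBinv, Matrix.one_mulVec]
  have hLHS : deriv (fun s => Q (U s x)) t = ∑ α, V (t, x) α * dEH α := by
    rw [hQd.deriv, Finset.sum_add_distrib]
    have hswap : ∑ β, τ β * ∑ γ, B⁻¹ β γ * U t x γ = ∑ β, U t x β * ∑ γ, B⁻¹ β γ * τ γ := by
      simp only [Finset.mul_sum]
      rw [Finset.sum_comm]
      refine Finset.sum_congr rfl fun γ _ => Finset.sum_congr rfl fun β _ => ?_
      rw [hBie β γ]
      ring
    rw [hswap]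
    have h5 : ∑ β, U t x β * ∑ γ, B⁻¹ β γ * τ γ = ∑ α, V (t, x) α * dEH α :=
      Finset.sum_congr rfl fun β _ => by rw [hMτ β]
    rw [h5]
    ring
  rw [hLHS, hRHS]
end

section
/- Let A be a bounded self-adjoint operator on a real Hilbert space H, and q ∈ H with Aw = q for some w ∈ H and ⟨q, w⟩ < 0 (the analogue of M_cc = −⟨q, U_c⟩ > 0). Then every U ∈ H decomposes uniquely as U = a·w + V with ⟨q, V⟩ = 0, and ⟨AU, U⟩ = a²·⟨q,w⟩ + ⟨AV, V⟩. Consequently, the negative signature of A equals the negative signature of the restriction of A to the orthogonal complement of q plus one. -/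
/-!
Writing `U = a • w + V` with `⟪q, V⟫ = 0`, self-adjointness and `A w = q` kill the cross terms,
so `⟪A U, U⟫ = a² ⟪q, w⟫ + ⟪A V, V⟫` with `⟪q, w⟫ < 0`. Hence a negative subspace of `q^⊥`
stays negative after adjoining `w`, giving `m + 1 ≤ n`; conversely a negative subspace of `H`
meets the hyperplane `q^⊥ = ker ⟪q, ·⟫` in codimension at most one, giving `n ≤ m + 1`.
-/

open scoped RealInnerProductSpace

/-- `n` is the negative signature of the quadratic form `f`: the maximal dimension of a
subspace on which `f` is negative definite. -/
def IsNegSig {V : Type*} [AddCommGroup V] [Module ℝ V] (f : V → ℝ) (n : ℕ) : Prop :=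
  (∃ W : Submodule ℝ V, Module.finrank ℝ W = n ∧ ∀ v ∈ W, v ≠ 0 → f v < 0) ∧
  ∀ m : ℕ, (∃ W : Submodule ℝ V, Module.finrank ℝ W = m ∧ ∀ v ∈ W, v ≠ 0 → f v < 0) → m ≤ n

open Module Submodule

section LinearAlgebra

variable {K V : Type*} [Field K] [AddCommGroup V] [Module K V]

theorem existsUnique_smul_add_of_apply_ne_zero {φ : V →ₗ[K] K} {w : V} (hw : φ w ≠ 0) (U : V) :
    ∃! p : K × V, φ p.2 = 0 ∧ U = p.1 • w + p.2 := by
  refine ⟨(φ U / φ w, U - (φ U / φ w) • w), ⟨?_, by module⟩, ?_⟩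
  · simp [div_mul_cancel₀ _ hw]
  · rintro ⟨a, x⟩ ⟨hx, rfl⟩
    simp only at hx
    simp [hx, hw]

theorem finrank_le_finrank_inf_ker_add_one (W : Submodule K V) [FiniteDimensional K W]
    (φ : V →ₗ[K] K) : finrank K W ≤ finrank K ↥(W ⊓ LinearMap.ker φ) + 1 := by
  rw [← map_comap_subtype, finrank_map_subtype_eq, ← LinearMap.ker_domRestrict,
    ← LinearMap.finrank_range_add_finrank_ker (φ.domRestrict W)]
  have := (LinearMap.range (φ.domRestrict W)).finrank_le
  rw [finrank_self] at this
  omega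

theorem finrank_sup_span_singleton_of_notMem (W : Submodule K V) [FiniteDimensional K W] {v : V}
    (hv : v ∉ W) : finrank K ↥(W ⊔ span K {v}) = finrank K W + 1 := by
  have hv0 : v ≠ 0 := fun h => hv (h ▸ W.zero_mem)
  have := finrank_sup_add_finrank_inf_eq W (span K {v})
  rwa [(disjoint_span_singleton_of_notMem hv).eq_bot, finrank_bot, add_zero,
    finrank_span_singleton hv0] at this

end LinearAlgebra

section NegativeSignature

variable {V : Type*} [AddCommGroup V] [Module ℝ V] {f : V → ℝ} {W W' K : Submodule ℝ V} {n m : ℕ}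

def IsNegDefOn (f : V → ℝ) (W : Submodule ℝ V) : Prop :=
  ∀ v ∈ W, v ≠ 0 → f v < 0

theorem IsNegDefOn.mono (hW : IsNegDefOn f W) (h : W' ≤ W) : IsNegDefOn f W' :=
  fun v hv => hW v (h hv)

theorem IsNegSig.finrank_le (hn : IsNegSig f n) (hW : IsNegDefOn f W) : finrank ℝ W ≤ n :=
  hn.2 _ ⟨W, rfl, hW⟩

/-- Since `finrank` of an infinite-dimensional space is `0`, the witness in `IsNegSig` may be
replaced by a finite-dimensional one. -/
theorem IsNegSig.exists_finiteDimensional (hn : IsNegSig f n) :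
    ∃ W : Submodule ℝ V, FiniteDimensional ℝ W ∧ finrank ℝ W = n ∧ IsNegDefOn f W := by
  obtain ⟨W, rfl, hW⟩ := hn.1
  by_cases hfin : FiniteDimensional ℝ W
  · exact ⟨W, hfin, rfl, hW⟩
  · refine ⟨⊥, inferInstance, ?_, fun v hv hv0 => absurd ((mem_bot ℝ).1 hv) hv0⟩
    rw [finrank_bot, finrank_of_infinite_dimensional hfin]

theorem IsNegSig.finrank_le_of_le (hm : IsNegSig (fun x : K => f x) m) (hWK : W ≤ K)
    (hW : IsNegDefOn f W) : finrank ℝ W ≤ m := by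
  rw [← (comapSubtypeEquivOfLe hWK).finrank_eq]
  exact hm.finrank_le fun x hx hx0 => hW x hx (by simpa using hx0)

theorem IsNegSig.exists_le_of_subtype (hm : IsNegSig (fun x : K => f x) m) :
    ∃ W ≤ K, FiniteDimensional ℝ W ∧ finrank ℝ W = m ∧ IsNegDefOn f W := by
  obtain ⟨W, _, rfl, hW⟩ := hm.exists_finiteDimensional
  refine ⟨W.map K.subtype, map_subtype_le K W, inferInstance, finrank_map_subtype_eq K W, ?_⟩
  rintro _ ⟨x, hx, rfl⟩ hx0
  exact hW x hx (by simpa using hx0)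

theorem IsNegDefOn.sup_span_singleton {w : V} (hW : IsNegDefOn f W) (hWK : W ≤ K)
    (hfw : f w < 0) (hsplit : ∀ (c : ℝ), ∀ x ∈ K, f (c • w + x) = c ^ 2 * f w + f x) :
    IsNegDefOn f (W ⊔ span ℝ {w}) := by
  have hf0 : f 0 = 0 := by simpa using hsplit 1 0 K.zero_mem
  intro v hv hv0
  obtain ⟨x, hx, _, hc, rfl⟩ := mem_sup.1 hv
  obtain ⟨c, rfl⟩ := mem_span_singleton.1 hc
  have hfx : f x ≤ 0 := by
    rcases eq_or_ne x 0 with rfl | hx0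
    · exact hf0.le
    · exact (hW x hx hx0).le
  rw [add_comm, hsplit c x (hWK hx)]
  rcases eq_or_ne c 0 with rfl | hc0
  · simpa using hW x hx (by simpa using hv0)
  · have hc2 : 0 < c ^ 2 := by positivity
    linarith [mul_neg_of_pos_of_neg hc2 hfw]

theorem IsNegSig.add_one_le {w : V} (hn : IsNegSig f n) (hm : IsNegSig (fun x : K => f x) m)
    (hwK : w ∉ K) (hfw : f w < 0)
    (hsplit : ∀ (c : ℝ), ∀ x ∈ K, f (c • w + x) = c ^ 2 * f w + f x) : m + 1 ≤ n := by
  obtain ⟨W, hWK, _, rfl, hW⟩ := hm.exists_le_of_subtype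
  rw [← finrank_sup_span_singleton_of_notMem W fun h => hwK (hWK h)]
  exact hn.finrank_le (hW.sup_span_singleton hWK hfw hsplit)

theorem IsNegSig.le_add_one_of_ker (φ : V →ₗ[ℝ] ℝ) (hn : IsNegSig f n)
    (hm : IsNegSig (fun x : LinearMap.ker φ => f x) m) : n ≤ m + 1 := by
  obtain ⟨W, _, rfl, hW⟩ := hn.exists_finiteDimensional
  calc finrank ℝ W ≤ finrank ℝ ↥(W ⊓ LinearMap.ker φ) + 1 :=
        finrank_le_finrank_inf_ker_add_one W φ
    _ ≤ m + 1 := by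
        gcongr
        exact hm.finrank_le_of_le inf_le_right (hW.mono inf_le_left)

end NegativeSignature

theorem LinearMap.IsSymmetric.inner_map_smul_add_self {E : Type*} [NormedAddCommGroup E]
    [InnerProductSpace ℝ E] {T : E →ₗ[ℝ] E} (hT : T.IsSymmetric) {q w V : E} (hw : T w = q)
    (hV : ⟪q, V⟫ = 0) (a : ℝ) :
    ⟪T (a • w + V), a • w + V⟫ = a ^ 2 * ⟪q, w⟫ + ⟪T V, V⟫ := by
  have hTVw : ⟪T V, w⟫ = 0 := by rw [hT, hw, real_inner_comm, hV]
  simp only [map_add, map_smul, hw, inner_add_left, inner_add_right, real_inner_smul_left,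
    real_inner_smul_right, hV, hTVw]
  ring

theorem ker_innerₛₗ_eq_orthogonal {E : Type*} [NormedAddCommGroup E] [InnerProductSpace ℝ E]
    (q : E) : LinearMap.ker (innerₛₗ ℝ q) = (span ℝ {q})ᗮ := by
  ext x
  simp [mem_orthogonal_singleton_iff_inner_right]

/-- Grillakis–Shatah–Strauss signature count, stable case `M_cc > 0`
(i.e. `⟨q, w⟩ < 0` with `A w = q`): every `U` decomposes uniquely as `U = a w + V` with
`⟨q, V⟩ = 0`, the quadratic form splits, and `neg(A) = neg(A|_{q^⊥}) + 1`. -/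
theorem gss_signature_count_stable
    {H : Type*} [NormedAddCommGroup H] [InnerProductSpace ℝ H] [CompleteSpace H]
    (A : H →L[ℝ] H) (hA : IsSelfAdjoint A)
    (q w : H) (hw : A w = q) (hqw : ⟪q, w⟫ < 0) :
    (∀ U : H, ∃! p : ℝ × H, ⟪q, p.2⟫ = 0 ∧ U = p.1 • w + p.2) ∧
    (∀ (a : ℝ) (V : H), ⟪q, V⟫ = 0 →
      ⟪A (a • w + V), a • w + V⟫ = a ^ 2 * ⟪q, w⟫ + ⟪A V, V⟫) ∧
    (∀ n m : ℕ, IsNegSig (fun U : H => ⟪A U, U⟫) n →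
      IsNegSig (fun U : ((Submodule.span ℝ {q})ᗮ : Submodule ℝ H) => ⟪A U.1, U.1⟫) m →
      n = m + 1) := by
  have hsplit (a : ℝ) (V : H) (hV : ⟪q, V⟫ = 0) :
      ⟪A (a • w + V), a • w + V⟫ = a ^ 2 * ⟪q, w⟫ + ⟪A V, V⟫ :=
    hA.isSymmetric.inner_map_smul_add_self hw hV a
  have hqw0 : innerₛₗ ℝ q w ≠ 0 := by simpa using hqw.ne
  refine ⟨fun U => by simpa using existsUnique_smul_add_of_apply_ne_zero hqw0 U, hsplit,
    fun n m hn hm => ?_⟩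
  rw [← ker_innerₛₗ_eq_orthogonal] at hm
  have hfw : ⟪A w, w⟫ < 0 := hw ▸ hqw
  refine le_antisymm (hn.le_add_one_of_ker _ hm) (hn.add_one_le hm hqw0 hfw fun c x hx => ?_)
  rw [hsplit c x (by simpa using hx), hw]
end

section
/- Let A be a bounded self-adjoint operator on a real Hilbert space H, q ∈ H with Aw = q and ⟨q, w⟩ > 0 (i.e. M_cc < 0). Then the negative signature of A equals the negative signature of the restriction of the quadratic form of A to the hyperplane q⊥ = {V : ⟨q,V⟩ = 0}. -/
open scoped RealInnerProductSpace

/-! The inclusion `q⊥ ⊆ H` shows that the constrained signature is at most the full one. Conversely,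
the oblique projection `P u = u - (⟪q, u⟫ / ⟪q, w⟫) • w` onto `q⊥` along `w` satisfies
`⟪A (P u), P u⟫ = ⟪A u, u⟫ - ⟪q, u⟫ ^ 2 / ⟪q, w⟫ ≤ ⟪A u, u⟫` because `A w = q` and `⟪q, w⟫ > 0`,
so `P` maps every negative definite subspace of `A` injectively onto one of `A|_{q⊥}`. -/

section NegSig

variable {V V' : Type*} [AddCommGroup V] [Module ℝ V] [AddCommGroup V'] [Module ℝ V']

theorem IsNegSig.le_of_map_le {f : V → ℝ} {g : V' → ℝ} {n m : ℕ} (hf : IsNegSig f n)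
    (hg : IsNegSig g m) (hg0 : g 0 = 0) (L : V →ₗ[ℝ] V') (hL : ∀ v, g (L v) ≤ f v) : n ≤ m := by
  obtain ⟨W, hWrank, hWneg⟩ := hf.1
  have hneg : ∀ v : W, v ≠ 0 → g (L v) < 0 := fun v hv =>
    (hL v).trans_lt (hWneg v v.2 fun h => hv (Subtype.ext h))
  have hinj : Function.Injective (L.domRestrict W) := by
    refine LinearMap.ker_eq_bot.mp (LinearMap.ker_eq_bot'.mpr fun v hv => ?_)
    by_contra hv0
    exact (hneg v hv0).ne (by rw [← LinearMap.domRestrict_apply, hv, hg0])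
  refine hg.2 n ⟨LinearMap.range (L.domRestrict W), ?_, ?_⟩
  · rw [LinearMap.finrank_range_of_inj hinj, hWrank]
  · rintro _ ⟨v, rfl⟩ hv
    exact hneg v fun h => hv (by rw [h, map_zero])

end NegSig

section Projection

variable {H : Type*} [NormedAddCommGroup H] [InnerProductSpace ℝ H]

theorem inner_map_sub_smul_sub_smul {T : H →ₗ[ℝ] H} (hT : T.IsSymmetric) {q w : H}
    (hw : T w = q) (u : H) (c : ℝ) :
    ⟪T (u - c • w), u - c • w⟫ = ⟪T u, u⟫ - 2 * c * ⟪q, u⟫ + c ^ 2 * ⟪q, w⟫ := by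
  have hTuw : ⟪T u, w⟫ = ⟪q, u⟫ := by rw [hT, hw, real_inner_comm]
  simp only [map_sub, map_smul, hw, inner_sub_left, inner_sub_right, real_inner_smul_left,
    real_inner_smul_right, hTuw, real_inner_comm w q]
  ring

noncomputable def projOrthogonalAlong (q w : H) (hqw : ⟪q, w⟫ ≠ 0) :
    H →ₗ[ℝ] (Submodule.span ℝ {q})ᗮ :=
  LinearMap.codRestrict _ (LinearMap.id - (⟪q, w⟫⁻¹ • innerₗ H q).smulRight w) fun u => by
    rw [Submodule.mem_orthogonal_singleton_iff_inner_right]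
    simp only [LinearMap.sub_apply, LinearMap.id_apply, LinearMap.smulRight_apply,
      LinearMap.smul_apply, innerₗ_apply_apply, inner_sub_right, real_inner_smul_right, smul_eq_mul]
    field_simp
    ring

theorem coe_projOrthogonalAlong (q w : H) (hqw : ⟪q, w⟫ ≠ 0) (u : H) :
    (projOrthogonalAlong q w hqw u : H) = u - (⟪q, u⟫ / ⟪q, w⟫) • w := by
  simp [projOrthogonalAlong, div_eq_inv_mul]

theorem inner_map_projOrthogonalAlong_le {T : H →ₗ[ℝ] H} (hT : T.IsSymmetric) {q w : H}
    (hw : T w = q) (hqw : 0 < ⟪q, w⟫) (u : H) :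
    ⟪T (projOrthogonalAlong q w hqw.ne' u), projOrthogonalAlong q w hqw.ne' u⟫ ≤ ⟪T u, u⟫ := by
  rw [coe_projOrthogonalAlong, inner_map_sub_smul_sub_smul hT hw]
  have hsquare : ⟪q, u⟫ ^ 2 / ⟪q, w⟫ =
      2 * (⟪q, u⟫ / ⟪q, w⟫) * ⟪q, u⟫ - (⟪q, u⟫ / ⟪q, w⟫) ^ 2 * ⟪q, w⟫ := by
    field_simp
    ring
  linarith [div_nonneg (sq_nonneg ⟪q, u⟫) hqw.le]

end Projection

/-- Grillakis–Shatah–Strauss signature count, unstable case `M_cc < 0`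
(i.e. `⟨q, w⟩ > 0` with `A w = q`): the negative signature of `A` equals that of the
restriction of its quadratic form to the hyperplane `q^⊥ = {V : ⟨q, V⟩ = 0}`. -/
theorem gss_signature_count_unstable
    {H : Type*} [NormedAddCommGroup H] [InnerProductSpace ℝ H] [CompleteSpace H]
    (A : H →L[ℝ] H) (hA : IsSelfAdjoint A)
    (q w : H) (hw : A w = q) (hqw : 0 < ⟪q, w⟫) :
    ∀ n m : ℕ, IsNegSig (fun U : H => ⟪A U, U⟫) n →
      IsNegSig (fun U : ((Submodule.span ℝ {q})ᗮ : Submodule ℝ H) => ⟪A U.1, U.1⟫) m →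
      n = m := by
  intro n m hn hm
  apply le_antisymm
  · exact hn.le_of_map_le hm (by simp) (projOrthogonalAlong q w hqw.ne')
      (inner_map_projOrthogonalAlong_le hA.isSymmetric hw hqw)
  · exact hm.le_of_map_le hn (by simp) (Submodule.subtype _) fun _ => le_rfl
end
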